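/- arXiv:2404.07478 — 3 statements merged into one kernel-verified Lean document; each statement's English description precedes it below -/
import Mathlib

section
/- Let X be a metric space, M a geodesic metric space, η > 0, and f : X → M a map of distortion at most η. Then for every loop σ : [0,1] → X there exists a loop σ' : [0,1] → M with σ'(0) = f(σ(0)) = σ'(1) and d(σ'(t), f(σ(t))) ≤ 5η for all t ∈ [0,1]. -/
open Set unitInterval

/-- A metric space is geodesic if every pair of points is joined by a unit-speed
continuous path defined on `[0, dist p q]`. -/
def IsGeodesicSpace (M : Type*) [MetricSpace M] : Prop :=
  ∀ p q : M, ∃ γ : ℝ → M,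
    ContinuousOn γ (Set.Icc 0 (dist p q)) ∧
    γ 0 = p ∧ γ (dist p q) = q ∧
    ∀ s ∈ Set.Icc 0 (dist p q), ∀ t ∈ Set.Icc 0 (dist p q),
      dist (γ s) (γ t) = |s - t|

/-- A map between metric spaces has distortion at most `η`. -/
def DistortionLE {X M : Type*} [MetricSpace X] [MetricSpace M]
    (f : X → M) (η : ℝ) : Prop :=
  ∀ a b : X, |dist (f a) (f b) - dist a b| ≤ η

section aux

variable {M : Type*} [MetricSpace M]

/-- A geodesic from `p` to `q`, as a `Path`, reparametrized on `[0,1]`. -/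
noncomputable def geoPath (hM : IsGeodesicSpace M) (p q : M) : Path p q where
  toFun := fun t => Classical.choose (hM p q) ((t : ℝ) * dist p q)
  continuous_toFun := by
    obtain ⟨hcont, h0, hd, hiso⟩ := Classical.choose_spec (hM p q)
    exact hcont.comp_continuous (by continuity) (fun t => ⟨mul_nonneg t.2.1 dist_nonneg,
      mul_le_of_le_one_left dist_nonneg t.2.2⟩)
  source' := by
    obtain ⟨hcont, h0, hd, hiso⟩ := Classical.choose_spec (hM p q)
    simpa using h0
  target' := by
    obtain ⟨hcont, h0, hd, hiso⟩ := Classical.choose_spec (hM p q)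
    simpa using hd

lemma geoPath_dist (hM : IsGeodesicSpace M) (p q : M) (t : unitInterval) :
    dist (geoPath hM p q t) p ≤ dist p q := by
  obtain ⟨hcont, h0, hd, hiso⟩ := Classical.choose_spec (hM p q)
  have hmem : (t : ℝ) * dist p q ∈ Set.Icc 0 (dist p q) :=
    ⟨mul_nonneg t.2.1 dist_nonneg, mul_le_of_le_one_left dist_nonneg t.2.2⟩
  have h := hiso _ hmem 0 ⟨le_refl 0, dist_nonneg⟩
  rw [h0] at h
  show dist (Classical.choose (hM p q) ((t : ℝ) * dist p q)) p ≤ dist p q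
  rw [h, sub_zero, abs_of_nonneg (mul_nonneg t.2.1 dist_nonneg)]
  exact mul_le_of_le_one_left dist_nonneg t.2.2

/-- Dyadic concatenation of `2^k` geodesic segments between values of `F`. -/
noncomputable def dyPath (hM : IsGeodesicSpace M) (F : ℝ → M) :
    (k : ℕ) → (a b : ℝ) → Path (F a) (F b)
  | 0, a, b => geoPath hM (F a) (F b)
  | (k+1), a, b => (dyPath hM F k a ((a+b)/2)).trans (dyPath hM F k ((a+b)/2) b)

lemma dist_f_le {X : Type*} [MetricSpace X] {f : X → M} {η : ℝ}
    (hf : DistortionLE f η) (a b : X) : dist (f a) (f b) ≤ dist a b + η := by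
  have := (abs_le.1 (hf a b)).2
  linarith

lemma dyPath_dist {X : Type*} [MetricSpace X] (hM : IsGeodesicSpace M)
    {η δ : ℝ} (hη : 0 < η) (hδ : 0 < δ)
    {f : X → M} (hf : DistortionLE f η) (g : ℝ → X)
    (hg : ∀ s t : ℝ, |s - t| ≤ δ → dist (g s) (g t) ≤ η) :
    ∀ (k : ℕ) (a b : ℝ), 0 ≤ b - a → b - a ≤ 2^k * δ →
      ∀ t : unitInterval,
        dist (dyPath hM (f ∘ g) k a b t) (f (g (a + t * (b - a)))) ≤ 4 * η := by
  intro k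
  induction k with
  | zero =>
    intro a b hab hab' t
    have h1 : dist (dyPath hM (f ∘ g) 0 a b t) (f (g a)) ≤ 2 * η := by
      have := geoPath_dist hM (f (g a)) (f (g b)) t
      have h2 : dist (f (g a)) (f (g b)) ≤ dist (g a) (g b) + η := dist_f_le hf _ _
      have h3 : dist (g a) (g b) ≤ η := hg a b (by rw [abs_sub_comm, abs_of_nonneg hab]; simpa using hab')
      calc dist (dyPath hM (f ∘ g) 0 a b t) (f (g a)) ≤ dist (f (g a)) (f (g b)) := this
        _ ≤ 2 * η := by linarith
    have h4 : dist (f (g a)) (f (g (a + t * (b - a)))) ≤ 2 * η := by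
      have h5 : dist (g a) (g (a + t * (b - a))) ≤ η := by
        apply hg
        have ht0 : (0:ℝ) ≤ t := t.2.1
        have ht1 : (t:ℝ) ≤ 1 := t.2.2
        rw [abs_sub_comm]
        rw [abs_of_nonneg (by have := mul_nonneg (t.2.1 : (0:ℝ) ≤ t) hab; linarith)]
        have : (t:ℝ) * (b - a) ≤ 1 * (b - a) := mul_le_mul_of_nonneg_right ht1 hab
        simp only [one_mul] at this
        have : (t:ℝ) * (b - a) ≤ δ := le_trans this (by simpa using hab')
        linarith [this]
      calc dist (f (g a)) (f (g (a + t * (b - a)))) ≤ dist (g a) (g (a + t * (b - a))) + η :=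
            dist_f_le hf _ _
        _ ≤ 2 * η := by linarith
    calc dist (dyPath hM (f ∘ g) 0 a b t) (f (g (a + t * (b - a))))
        ≤ dist (dyPath hM (f ∘ g) 0 a b t) (f (g a)) + dist (f (g a)) (f (g (a + t * (b - a)))) :=
          dist_triangle _ _ _
      _ ≤ 4 * η := by linarith
  | succ k ih =>
    intro a b hab hab' t
    have key : dyPath hM (f ∘ g) (k+1) a b =
        (dyPath hM (f ∘ g) k a ((a+b)/2)).trans (dyPath hM (f ∘ g) k ((a+b)/2) b) := rfl
    rw [key, Path.trans_apply]
    have hhalf : (a+b)/2 - a = (b - a)/2 := by ring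
    have hhalf' : b - (a+b)/2 = (b - a)/2 := by ring
    have hle : (b - a)/2 ≤ 2^k * δ := by
      rw [pow_succ] at hab'; linarith
    split_ifs with h
    · have := ih a ((a+b)/2) (by linarith) (by linarith)
        ⟨2 * (t:ℝ), by have := t.2.1; constructor <;> linarith⟩
      convert this using 4
      push_cast
      ring
    · have := ih ((a+b)/2) b (by linarith) (by linarith)
        ⟨2 * (t:ℝ) - 1, by have := not_le.1 h; have := t.2.2; constructor <;> linarith⟩
      convert this using 4
      push_cast
      ring

end aux

/-- given a map `f : X → M` of distortion at most `η` into a geodesic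
space `M`, every loop `c` in `X` admits a nearby loop `c'` in `M`, based at
`f (c 0)` and uniformly `5 * η`-close to `f ∘ c`. -/
theorem nearby_loop_exists {X M : Type*} [MetricSpace X] [MetricSpace M]
    (hM : IsGeodesicSpace M) (η : ℝ) (hη : 0 < η)
    (f : X → M) (hf : DistortionLE f η)
    (c : C(unitInterval, X)) (hc : c 0 = c 1) :
    ∃ c' : C(unitInterval, M),
      c' 0 = f (c 0) ∧ c' 1 = f (c 0) ∧
      ∀ t : unitInterval, dist (c' t) (f (c t)) ≤ 5 * η := by
  -- extend the loop to all of ℝ via the projection onto [0,1]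
  set g : ℝ → X := fun r => c (projIcc 0 1 zero_le_one r) with hg_def
  have hgcont : UniformContinuous g :=
    (CompactSpace.uniformContinuous_of_continuous c.continuous).comp
      (LipschitzWith.projIcc _).uniformContinuous
  obtain ⟨δ, hδ, hδ'⟩ := Metric.uniformContinuous_iff.1 hgcont η hη
  have hg : ∀ s t : ℝ, |s - t| ≤ δ/2 → dist (g s) (g t) ≤ η := by
    intro s t hst
    exact le_of_lt (hδ' (by rw [Real.dist_eq]; linarith))
  -- choose the dyadic depth
  obtain ⟨k, hk⟩ := pow_unbounded_of_one_lt (1/(δ/2)) (one_lt_two (α := ℝ))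
  have hk' : (1:ℝ) ≤ 2^k * (δ/2) := by
    have h2 : (0:ℝ) < δ/2 := by linarith
    rw [div_lt_iff₀ h2] at hk
    nlinarith
  set P := dyPath hM (f ∘ g) k 0 1 with hP
  have hbound := dyPath_dist hM hη (by linarith : (0:ℝ) < δ/2) hf g hg k 0 1
    (by norm_num) (by linarith)
  have hg0 : g 0 = c 0 := by simp [hg_def, projIcc_left]
  have hg1 : g 1 = c 1 := by simp [hg_def, projIcc_right]
  refine ⟨P.toContinuousMap, ?_, ?_, ?_⟩
  · show P 0 = f (c 0)
    rw [P.source]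
    simp [hg0]
  · show P 1 = f (c 0)
    rw [P.target]
    simp [hg1, ← hc]
  · intro t
    have := hbound t
    have hgt : g (0 + t * (1 - 0)) = c t := by
      simp only [sub_zero, mul_one, zero_add, hg_def]
      congr 1
      exact projIcc_val zero_le_one t
    rw [hgt] at this
    show dist (P t) (f (c t)) ≤ 5 * η
    calc dist (P t) (f (c t)) ≤ 4 * η := this
      _ ≤ 5 * η := by linarith
end

section
/- Let M be a geodesic metric space and δ > 0. Let c₀, c₁ : [0,1] → M be loops such that d(c₀(t), c₁(t)) ≤ δ/150 for all t ∈ [0,1]. Suppose that for every t ∈ [0,1], every loop whose image is contained in the open ball of radius δ/30 around c₀(t) is null-homotopic in M. Then c₀ and c₁ are freely homotopic in M. If moreover c₀(0) = c₁(0), then c₀ and c₁ are homotopic relative to {0,1}. -/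
open Set unitInterval

/-- Two loops (continuous maps `[0,1] → Z` with equal endpoints) are freely homotopic:
there is a continuous `H` with `H (t,0) = c₀ t`, `H (t,1) = c₁ t` and `H (0,s) = H (1,s)`. -/
def FreelyHomotopic {Z : Type*} [TopologicalSpace Z]
    (c₀ c₁ : C(unitInterval, Z)) : Prop :=
  ∃ H : C(unitInterval × unitInterval, Z),
    (∀ t, H (t, 0) = c₀ t) ∧ (∀ t, H (t, 1) = c₁ t) ∧ (∀ s, H (0, s) = H (1, s))

/-- A loop is null-homotopic if it is freely homotopic to a constant loop. -/
def NullHomotopicLoop {Z : Type*} [TopologicalSpace Z]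
    (c : C(unitInterval, Z)) : Prop :=
  ∃ z : Z, FreelyHomotopic c (ContinuousMap.const unitInterval z)

noncomputable section

instance : ContractibleSpace unitInterval :=
  (convex_Icc (0:ℝ) 1).contractibleSpace (nonempty_Icc.2 zero_le_one)

instance : ContractibleSpace (unitInterval × unitInterval) := by
  obtain ⟨h⟩ := ContractibleSpace.hequiv_unit' (X := unitInterval)
  exact (h.prodCongr h).contractibleSpace

example : SimplyConnectedSpace (unitInterval × unitInterval) := inferInstance

/-- transfer homotopic along pointwise equality -/
theorem path_homotopic_congr {X : Type*} [TopologicalSpace X] {x y x' y' : X}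
    {p q : Path x y} {p' q' : Path x' y'} (h : p'.Homotopic q')
    (hp : ∀ t, p t = p' t) (hq : ∀ t, q t = q' t) : p.Homotopic q := by
  obtain rfl : x = x' := by rw [← p.source, ← p'.source, hp 0]
  obtain rfl : y = y' := by rw [← p.target, ← p'.target, hp 1]
  obtain rfl : p = p' := Path.ext (funext hp)
  obtain rfl : q = q' := Path.ext (funext hq)
  exact h

theorem map_homotopic {X Y : Type*} [TopologicalSpace X] [TopologicalSpace Y]
    [SimplyConnectedSpace X] {a b : X} (f : C(X, Y)) (p q : Path a b) :
    (p.map f.continuous).Homotopic (q.map f.continuous) :=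
  (SimplyConnectedSpace.paths_homotopic p q).map _

namespace ClLoop
variable {X : Type*} [TopologicalSpace X]

theorem ht_assoc {x₀ x₁ x₂ x₃ : X} (p : Path x₀ x₁) (q : Path x₁ x₂) (r : Path x₂ x₃) :
    ((p.trans q).trans r).Homotopic (p.trans (q.trans r)) := ⟨Path.Homotopy.transAssoc p q r⟩

theorem ht_transRefl {x y : X} (p : Path x y) : (p.trans (Path.refl y)).Homotopic p :=
  ⟨Path.Homotopy.transRefl p⟩

theorem ht_reflTrans {x y : X} (p : Path x y) : ((Path.refl x).trans p).Homotopic p :=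
  ⟨Path.Homotopy.reflTrans p⟩

theorem ht_transSymm {x y : X} (p : Path x y) :
    (p.trans p.symm).Homotopic (Path.refl x) := ⟨(Path.Homotopy.reflTransSymm p).symm⟩

theorem ht_symmTrans {x y : X} (p : Path x y) :
    (p.symm.trans p).Homotopic (Path.refl y) := ⟨(Path.Homotopy.reflSymmTrans p).symm⟩

theorem cancel_of_null {a b : X} (p q : Path a b)
    (h : (p.trans q.symm).Homotopic (Path.refl a)) : p.Homotopic q := by
  have h1 : p.Homotopic (p.trans (q.symm.trans q)) :=
    (ht_transRefl p).symm.trans (Path.Homotopic.hcomp (.refl _) (ht_symmTrans q).symm)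
  have h2 : (p.trans (q.symm.trans q)).Homotopic ((Path.refl a).trans q) :=
    (ht_assoc _ _ _).symm.trans (Path.Homotopic.hcomp h (.refl _))
  exact (h1.trans h2).trans (ht_reflTrans q)


theorem square_rel {w x y z : X} (A : Path w x) (B : Path x y) (C : Path z y) (D : Path w z)
    (h : (((A.trans B).trans C.symm).trans D.symm).Homotopic (Path.refl w)) :
    (A.trans B).Homotopic (D.trans C) := by
  have h1 : ((A.trans B).trans C.symm).Homotopic D := cancel_of_null _ _ h
  have h2 : (A.trans B).Homotopic ((A.trans B).trans (C.symm.trans C)) :=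
    (ht_transRefl _).symm.trans (Path.Homotopic.hcomp (.refl _) (ht_symmTrans C).symm)
  have h3 : ((A.trans B).trans (C.symm.trans C)).Homotopic (((A.trans B).trans C.symm).trans C) :=
    (ht_assoc _ _ _).symm
  exact (h2.trans h3).trans (Path.Homotopic.hcomp h1 (.refl _))

end ClLoop

open ClLoop in
theorem null_homotopic_refl {X : Type*} [TopologicalSpace X] {x : X} (L : Path x x)
    (hn : NullHomotopicLoop L.toContinuousMap) : L.Homotopic (Path.refl x) := by
  obtain ⟨z, H, h0, h1, hlr⟩ := hn
  have h0' : ∀ t, H (t, 0) = L t := h0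
  have h1' : ∀ t, H (t, 1) = z := h1
  set idp : Path (0:unitInterval) 1 := ⟨⟨id, continuous_id⟩, rfl, rfl⟩ with hidp
  set β : Path ((0:unitInterval), (0:unitInterval)) (1, 0) := idp.prod (Path.refl 0) with hβ
  set ρ : Path ((0:unitInterval), (0:unitInterval)) (1, 0) :=
    ((Path.refl (0:unitInterval)).prod idp).trans
      ((idp.prod (Path.refl (1:unitInterval))).trans
        (((Path.refl (1:unitInterval)).prod idp).symm)) with hρ
  have hβρ : (β.map H.continuous).Homotopic (ρ.map H.continuous) := map_homotopic H β ρ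
  have e1 : H (0, 0) = x := (h0' 0).trans L.source
  have e2 : H (1, 0) = x := (h0' 1).trans L.target
  set τ : Path x z := ⟨⟨fun s => H (0, s), by fun_prop⟩, e1, h1' 0⟩ with hτ
  set Q : Path (H ((0:unitInterval), (0:unitInterval))) (H ((1:unitInterval), (0:unitInterval))) :=
    ⟨⟨fun _ => x, continuous_const⟩, e1.symm, e2.symm⟩ with hQ
  have halg : (τ.trans ((Path.refl z).trans τ.symm)).Homotopic (Path.refl x) :=
    (Path.Homotopic.hcomp (.refl τ) (ht_reflTrans τ.symm)).trans (ht_transSymm τ)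
  have h2 : (ρ.map H.continuous).Homotopic Q := by
    refine path_homotopic_congr halg ?_ (fun t => rfl)
    intro u
    simp only [hρ, Path.map_coe, Function.comp_apply, Path.trans_apply]
    split_ifs with hu hv
    · rfl
    · simp only [Path.prod_coe, Path.coe_mk_mk, id_eq]
      exact h1' _
    · simp only [Path.symm_apply, Function.comp_apply, Path.prod_coe, Path.coe_mk_mk, id_eq]
      simp only [hτ, Path.coe_mk_mk, Path.refl_apply]
      exact (hlr _).symm
  refine path_homotopic_congr (hβρ.trans h2) (fun u => ?_) (fun u => rfl)
  simp only [hβ, Path.map_coe, Function.comp_apply, Path.prod_coe, Path.coe_mk_mk, id_eq]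
  exact (h0' u).symm

section Freely
variable {Z : Type*} [TopologicalSpace Z]

theorem freely_of_homotopy {c₀ c₁ : C(unitInterval, Z)} (F : ContinuousMap.Homotopy c₀ c₁)
    (hF : ∀ s, F (s, 0) = F (s, 1)) : FreelyHomotopic c₀ c₁ := by
  refine ⟨⟨fun p => F (p.2, p.1), by fun_prop⟩, fun t => ?_, fun t => ?_, fun s => ?_⟩
  · simp
  · simp
  · exact hF s

theorem freelyHomotopic_trans {a b c : C(unitInterval, Z)} (h₁ : FreelyHomotopic a b)
    (h₂ : FreelyHomotopic b c) : FreelyHomotopic a c := by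
  obtain ⟨H₁, h₁0, h₁1, h₁lr⟩ := h₁
  obtain ⟨H₂, h₂0, h₂1, h₂lr⟩ := h₂
  set F₁ : ContinuousMap.Homotopy a b :=
    ⟨⟨fun p => H₁ (p.2, p.1), by fun_prop⟩, fun t => h₁0 t, fun t => h₁1 t⟩ with hF₁
  set F₂ : ContinuousMap.Homotopy b c :=
    ⟨⟨fun p => H₂ (p.2, p.1), by fun_prop⟩, fun t => h₂0 t, fun t => h₂1 t⟩ with hF₂
  refine freely_of_homotopy (F₁.trans F₂) fun s => ?_
  rw [ContinuousMap.Homotopy.trans_apply, ContinuousMap.Homotopy.trans_apply]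
  split_ifs
  · exact h₁lr _
  · exact h₂lr _

theorem freely_of_pathHomotopic {x : Z} {p q : Path x x} (h : p.Homotopic q) :
    FreelyHomotopic p.toContinuousMap q.toContinuousMap := by
  obtain ⟨F⟩ := h
  refine freely_of_homotopy F.toHomotopy fun s => ?_
  have h₀ := F.prop s 0 (by simp)
  have h₁ := F.prop s 1 (by simp)
  rw [show F.toHomotopy (s, 0) = _ from h₀, show F.toHomotopy (s, 1) = _ from h₁]
  simp [p.source, p.target]

end Freely

theorem path_app_congr {X : Type*} [TopologicalSpace X] {x y : X} (p : Path x y)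
    {a b : unitInterval} (h : (a:ℝ) = (b:ℝ)) : p a = p b :=
  congrArg p (Subtype.ext h)

theorem freely_conj {Z : Type*} [TopologicalSpace Z] {x y : Z} (g : Path x y) (q : Path y y) :
    FreelyHomotopic (g.trans (q.trans g.symm)).toContinuousMap q.toContinuousMap := by
  set P := g.trans (q.trans g.symm) with hP
  have hmem : ∀ t s : unitInterval, (s:ℝ)/2 + t*(1 - 3*s/4) ∈ unitInterval := by
    intro t s
    constructor
    · nlinarith [t.2.1, t.2.2, s.2.1, s.2.2]
    · nlinarith [t.2.1, t.2.2, s.2.1, s.2.2]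
  set K : C(unitInterval × unitInterval, Z) :=
    ⟨fun p => P ⟨(p.2:ℝ)/2 + p.1*(1 - 3*p.2/4), hmem p.1 p.2⟩,
      P.continuous.comp (Continuous.subtype_mk (by fun_prop) _)⟩ with hK
  refine ⟨K, fun t => ?_, fun t => ?_, fun s => ?_⟩
  · -- K (t, 0) = P t
    show P _ = P t
    exact path_app_congr P (by norm_num)
  · -- K (t, 1) = q t
    show P _ = q t
    rw [hP, Path.trans_apply]
    split_ifs with h
    · norm_num at h
      have ht : (t:ℝ) = 0 := le_antisymm (by nlinarith) t.2.1
      calc _ = g 1 := path_app_congr g (by norm_num [ht])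
        _ = y := g.target
        _ = q 0 := q.source.symm
        _ = q t := path_app_congr q (by norm_num [ht])
    · rw [Path.trans_apply]
      split_ifs with h2
      · exact path_app_congr q (by norm_num; ring)
      · exfalso
        norm_num at h2
        nlinarith [t.2.2]
  · -- K (0, s) = K (1, s)
    have hL : K (0, s) = g s := by
      show P _ = g s
      rw [hP, Path.trans_apply]
      split_ifs with h
      · exact path_app_congr g (by norm_num; ring)
      · exfalso
        norm_num at h
        nlinarith [s.2.2]
    have hR : K (1, s) = g s := by
      show P _ = g s
      rw [hP, Path.trans_apply]
      split_ifs with h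
      · exfalso
        norm_num at h
        nlinarith [s.2.2]
      · rw [Path.trans_apply]
        split_ifs with h2
        · -- s = 1 case
          norm_num at h2
          have hs : (s:ℝ) = 1 := by nlinarith [s.2.2]
          calc _ = q 1 := path_app_congr q (by norm_num [hs])
            _ = y := q.target
            _ = g 1 := g.target.symm
            _ = g s := path_app_congr g (by norm_num [hs])
        · show g.symm _ = g s
          rw [Path.symm_apply]
          exact path_app_congr g (by norm_num; ring)
    rw [hL, hR]

theorem geo_exists {M : Type*} [MetricSpace M] (hM : IsGeodesicSpace M) (p q : M) :
    ∃ gp : Path p q, ∀ t, dist p (gp t) ≤ dist p q := by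
  obtain ⟨γ, hcont, h0, h1, hiso⟩ := hM p q
  have hmem : ∀ t : unitInterval, (t:ℝ) * dist p q ∈ Set.Icc 0 (dist p q) :=
    fun t => ⟨mul_nonneg t.2.1 dist_nonneg, mul_le_of_le_one_left dist_nonneg t.2.2⟩
  refine ⟨⟨⟨fun t => γ ((t:ℝ) * dist p q),
    hcont.comp_continuous (by fun_prop) hmem⟩, ?_, ?_⟩, ?_⟩
  · simp [h0]
  · simp [h1]
  · intro t
    show dist p (γ _) ≤ _
    have hd := hiso 0 (Set.left_mem_Icc.2 dist_nonneg) _ (hmem t)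
    rw [h0] at hd
    rw [hd, zero_sub, abs_neg, abs_of_nonneg (hmem t).1]
    exact (hmem t).2

/-- the straight segment from `a` to `b` inside the unit interval -/
def lineI (a b : unitInterval) : Path a b where
  toFun := fun u => ⟨(1 - (u:ℝ)) * a + u * b, by
    constructor
    · nlinarith [u.2.1, u.2.2, a.2.1, b.2.1]
    · nlinarith [u.2.1, u.2.2, a.2.2, b.2.2]⟩
  continuous_toFun := by fun_prop
  source' := by ext; norm_num
  target' := by ext; norm_num

/-- the restriction of `f` to `[a,b]`, as a path -/
def segm {Z : Type*} [TopologicalSpace Z] (f : C(unitInterval, Z)) (a b : unitInterval) :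
    Path (f a) (f b) := (lineI a b).map f.continuous

theorem segm_apply {Z : Type*} [TopologicalSpace Z] (f : C(unitInterval, Z)) (a b : unitInterval)
    (u : unitInterval) : segm f a b u = f (lineI a b u) := rfl

theorem segm_trans {Z : Type*} [TopologicalSpace Z] (f : C(unitInterval, Z))
    (a b c : unitInterval) : ((segm f a b).trans (segm f b c)).Homotopic (segm f a c) := by
  rw [segm, segm, segm, ← Path.map_trans]
  exact map_homotopic f _ _

theorem lineI_coe (a b u : unitInterval) :
    ((lineI a b u : unitInterval) : ℝ) = (1 - (u:ℝ)) * a + u * b := rfl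


open ClLoop

/-- two loops in a geodesic space `M` that are uniformly `δ/150`-close are
freely homotopic, provided every loop lying in some `δ/30`-ball around a point of the
first loop is null-homotopic in `M`; moreover, if they share their basepoint, they are
homotopic relative to `{0, 1}`. -/
theorem close_loops_homotopic {M : Type*} [MetricSpace M]
    (hM : IsGeodesicSpace M) (δ : ℝ) (hδ : 0 < δ)
    (c₀ c₁ : C(unitInterval, M)) (hc₀ : c₀ 0 = c₀ 1) (hc₁ : c₁ 0 = c₁ 1)
    (hclose : ∀ t : unitInterval, dist (c₀ t) (c₁ t) ≤ δ / 150)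
    (hcontract : ∀ t : unitInterval, ∀ c : C(unitInterval, M),
      c 0 = c 1 → (Set.range c ⊆ Metric.ball (c₀ t) (δ / 30)) → NullHomotopicLoop c) :
    FreelyHomotopic c₀ c₁ ∧
      (c₀ 0 = c₁ 0 → ContinuousMap.HomotopicRel c₀ c₁ {0, 1}) := by
  classical
  choose Gc hGc using geo_exists hM
  set G : ∀ p q : M, Path p q :=
    fun p q => if h : p = q then (Path.refl p).cast rfl h.symm else Gc p q with hGdef
  have hGrefl : ∀ (p q : M) (h : p = q) (u), G p q u = p := by
    intro p q h u
    subst h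
    show (dite _ _ _ : Path p p) u = p
    rw [dif_pos rfl]
    exact congrFun (Path.cast_coe _ _ _) u
  have hG : ∀ p q t, dist p (G p q t) ≤ dist p q := by
    intro p q u
    by_cases h : p = q
    · rw [hGrefl p q h u]
      simp [dist_nonneg]
    · show dist p ((dite _ _ _ : Path p q) u) ≤ _
      rw [dif_neg h]
      exact hGc p q u
  obtain ⟨ε₀, hε₀pos, hu₀⟩ := Metric.uniformContinuous_iff.mp
    (CompactSpace.uniformContinuous_of_continuous c₀.continuous) (δ/150) (by positivity)
  obtain ⟨ε₁, hε₁pos, hu₁⟩ := Metric.uniformContinuous_iff.mp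
    (CompactSpace.uniformContinuous_of_continuous c₁.continuous) (δ/150) (by positivity)
  obtain ⟨n, hn⟩ := exists_nat_one_div_lt (show (0:ℝ) < min ε₀ ε₁ from lt_min hε₀pos hε₁pos)
  set N : ℕ := n + 1 with hNdef
  have hNpos : (0:ℝ) < N := by positivity
  have hN : (1:ℝ)/N < min ε₀ ε₁ := by rw [hNdef]; push_cast; exact hn
  set t : ℕ → unitInterval := fun i => Set.projIcc 0 1 zero_le_one ((i:ℝ)/N) with htdef
  have hti : ∀ i, i ≤ N → ((t i : ℝ)) = i / N := by
    intro i hi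
    have hmem : (i:ℝ)/N ∈ Set.Icc (0:ℝ) 1 :=
      ⟨by positivity, by rw [div_le_one hNpos]; exact_mod_cast hi⟩
    have := congrArg Subtype.val (Set.projIcc_of_mem zero_le_one hmem)
    simpa [htdef] using this
  -- the local squares
  have key : ∀ i, i < N →
      ((segm c₀ (t i) (t (i+1))).trans (G (c₀ (t (i+1))) (c₁ (t (i+1))))).Homotopic
        ((G (c₀ (t i)) (c₁ (t i))).trans (segm c₁ (t i) (t (i+1)))) := by
    intro i hi
    have hia : (t i : ℝ) = i / N := hti i (le_of_lt hi)
    have hib : (t (i+1) : ℝ) = (i+1 : ℕ) / N := hti _ hi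
    have hab : (t i : ℝ) ≤ (t (i+1) : ℝ) := by
      rw [hia, hib]; gcongr; exact_mod_cast Nat.le_succ i
    have hgap : (t (i+1) : ℝ) - t i = 1/N := by rw [hia, hib]; push_cast; ring
    set a := t i with ha
    set b := t (i+1) with hb
    have hwd : ∀ u, dist ((lineI a b) u) a < min ε₀ ε₁ := by
      intro u
      rw [Subtype.dist_eq, Real.dist_eq, lineI_coe,
        abs_of_nonneg (by nlinarith [u.2.1, u.2.2])]
      nlinarith [u.2.1, u.2.2, hN]
    have hba : dist b a < min ε₀ ε₁ := by
      rw [Subtype.dist_eq, Real.dist_eq, abs_of_nonneg (by linarith), hgap]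
      exact hN
    set A := segm c₀ a b with hA
    set B := G (c₀ b) (c₁ b) with hB
    set C := segm c₁ a b with hC
    set D := G (c₀ a) (c₁ a) with hD
    set L := ((A.trans B).trans C.symm).trans D.symm with hL
    have hnull : NullHomotopicLoop L.toContinuousMap := by
      apply hcontract a
      · exact L.source.trans L.target.symm
      · intro z hz
        rw [Metric.mem_ball]
        have hz' : z ∈ Set.range ⇑L := hz
        rw [hL, Path.trans_range, Path.trans_range, Path.trans_range,
          Path.symm_range, Path.symm_range] at hz'
        rcases hz' with (((⟨u, rfl⟩ | ⟨u, rfl⟩) | ⟨u, rfl⟩) | ⟨u, rfl⟩)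
        · have := hu₀ (lt_of_lt_of_le (hwd u) (min_le_left _ _))
          show dist (c₀ ((lineI a b) u)) (c₀ a) < δ/30
          linarith
        · have h1 : dist (B u) (c₀ b) ≤ δ/150 := by
            rw [dist_comm]; exact le_trans (hG _ _ u) (hclose b)
          have h2 : dist (c₀ b) (c₀ a) < δ/150 :=
            hu₀ (lt_of_lt_of_le hba (min_le_left _ _))
          have h3 := dist_triangle (B u) (c₀ b) (c₀ a)
          linarith
        · have h1 : dist (c₁ ((lineI a b) u)) (c₁ a) < δ/150 :=
            hu₁ (lt_of_lt_of_le (hwd u) (min_le_right _ _))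
          have h2 : dist (c₁ a) (c₀ a) ≤ δ/150 := by
            rw [dist_comm]; exact hclose a
          have h3 := dist_triangle (c₁ ((lineI a b) u)) (c₁ a) (c₀ a)
          show dist (c₁ ((lineI a b) u)) (c₀ a) < δ/30
          linarith
        · have h1 : dist (D u) (c₀ a) ≤ δ/150 := by
            rw [dist_comm]; exact le_trans (hG _ _ u) (hclose a)
          linarith
    exact square_rel A B C D (null_homotopic_refl L hnull)
  -- the inductive concatenation
  have main : ∀ i, i ≤ N →
      ((segm c₀ (t 0) (t i)).trans (G (c₀ (t i)) (c₁ (t i)))).Homotopic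
        ((G (c₀ (t 0)) (c₁ (t 0))).trans (segm c₁ (t 0) (t i))) := by
    intro i
    induction i with
    | zero =>
      intro _
      refine path_homotopic_congr (p' := (Path.refl (c₀ (t 0))).trans (G (c₀ (t 0)) (c₁ (t 0))))
        (q' := (G (c₀ (t 0)) (c₁ (t 0))).trans (Path.refl (c₁ (t 0))))
        ((ht_reflTrans _).trans (ht_transRefl _).symm) ?_ ?_
      · intro u
        rw [Path.trans_apply, Path.trans_apply]
        split_ifs
        · exact congrArg c₀ (Subtype.ext (by rw [lineI_coe]; ring))
        · rfl
      · intro u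
        rw [Path.trans_apply, Path.trans_apply]
        split_ifs
        · rfl
        · exact congrArg c₁ (Subtype.ext (by rw [lineI_coe]; ring))
    | succ i ih =>
      intro hi1
      have hi : i < N := lt_of_lt_of_le (Nat.lt_succ_self i) hi1
      have h1 := Path.Homotopic.hcomp (segm_trans c₀ (t 0) (t i) (t (i+1))).symm
        (Path.Homotopic.refl (G (c₀ (t (i+1))) (c₁ (t (i+1)))))
      have h2 := ht_assoc (segm c₀ (t 0) (t i)) (segm c₀ (t i) (t (i+1)))
        (G (c₀ (t (i+1))) (c₁ (t (i+1))))
      have h3 := Path.Homotopic.hcomp (Path.Homotopic.refl (segm c₀ (t 0) (t i))) (key i hi)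
      have h4 := (ht_assoc (segm c₀ (t 0) (t i)) (G (c₀ (t i)) (c₁ (t i)))
        (segm c₁ (t i) (t (i+1)))).symm
      have h5 := Path.Homotopic.hcomp (ih (le_of_lt hi))
        (Path.Homotopic.refl (segm c₁ (t i) (t (i+1))))
      have h6 := ht_assoc (G (c₀ (t 0)) (c₁ (t 0))) (segm c₁ (t 0) (t i))
        (segm c₁ (t i) (t (i+1)))
      have h7 := Path.Homotopic.hcomp (Path.Homotopic.refl (G (c₀ (t 0)) (c₁ (t 0))))
        (segm_trans c₁ (t 0) (t i) (t (i+1)))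
      exact (((((h1.trans h2).trans h3).trans h4).trans h5).trans h6).trans h7
  have e0 : t 0 = 0 := Subtype.ext (by rw [hti 0 (Nat.zero_le _)]; norm_num)
  have eN : t N = 1 := Subtype.ext (by rw [hti N le_rfl, div_self (ne_of_gt hNpos)]; norm_num)
  have hmainN := main N le_rfl
  rw [e0, eN] at hmainN
  have hGG : ∀ v, G (c₀ 1) (c₁ 1) v = G (c₀ 0) (c₁ 0) v := by
    intro v; rw [← hc₀, ← hc₁]
  set q₀ : Path (c₀ 0) (c₀ 0) := ⟨c₀, rfl, hc₀.symm⟩ with hq₀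
  set q₁ : Path (c₁ 0) (c₁ 0) := ⟨c₁, rfl, hc₁.symm⟩ with hq₁
  set g : Path (c₀ 0) (c₁ 0) := G (c₀ 0) (c₁ 0) with hg
  have hfin : (q₀.trans g).Homotopic (g.trans q₁) := by
    refine path_homotopic_congr hmainN ?_ ?_
    · intro u
      rw [Path.trans_apply, Path.trans_apply]
      split_ifs
      · exact congrArg c₀ (Subtype.ext (by rw [lineI_coe]; norm_num))
      · exact (hGG _).symm
    · intro u
      rw [Path.trans_apply, Path.trans_apply]
      split_ifs
      · rfl
      · exact congrArg c₁ (Subtype.ext (by rw [lineI_coe]; norm_num))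
  constructor
  · -- free homotopy
    have hPconj : q₀.Homotopic (g.trans (q₁.trans g.symm)) := by
      have s1 : q₀.Homotopic (q₀.trans (g.trans g.symm)) :=
        (ht_transRefl q₀).symm.trans (Path.Homotopic.hcomp (.refl _) (ht_transSymm g).symm)
      have s2 : (q₀.trans (g.trans g.symm)).Homotopic ((q₀.trans g).trans g.symm) :=
        (ht_assoc _ _ _).symm
      have s3 : ((q₀.trans g).trans g.symm).Homotopic ((g.trans q₁).trans g.symm) :=
        Path.Homotopic.hcomp hfin (.refl _)
      exact ((s1.trans s2).trans s3).trans (ht_assoc _ _ _)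
    exact freelyHomotopic_trans (freely_of_pathHomotopic hPconj) (freely_conj g q₁)
  · -- relative homotopy
    intro hb
    set q₁' : Path (c₀ 0) (c₀ 0) := ⟨c₁, hb.symm, (hb.trans hc₁).symm⟩ with hq₁'
    have hA : (q₀.trans (Path.refl (c₀ 0))).Homotopic ((Path.refl (c₀ 0)).trans q₁') := by
      refine path_homotopic_congr hfin ?_ ?_
      · intro u
        rw [Path.trans_apply, Path.trans_apply]
        split_ifs
        · rfl
        · exact (hGrefl _ _ hb _).symm
      · intro u
        rw [Path.trans_apply, Path.trans_apply]
        split_ifs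
        · exact (hGrefl _ _ hb _).symm
        · rfl
    have hrel : q₀.Homotopic q₁' := ((ht_transRefl q₀).symm.trans hA).trans (ht_reflTrans q₁')
    obtain ⟨F⟩ := hrel
    exact ⟨F⟩

end
end

section
/- Let X and M be geodesic metric spaces, x ∈ X, p ∈ M, δ₀ > 0, and 0 < η ≤ δ₀/2100. Let g : M → X and f : X → M be maps of distortion at most η with g(p) = x, f(x) = p, and d(g(f(z)), z) ≤ η for all z ∈ X. Assume that every loop in X whose image is contained in some open ball of radius δ₀/30 is null-homotopic in X. Then there is a unique group homomorphism Φ : π₁(M, p) → π₁(X, x) such that Φ([c]) = [c'] whenever c is a loop at p in M and c' is a loop at x in X with d(c'(t), g(c(t))) ≤ δ₀/300 for all t ∈ [0,1]; moreover Φ is surjective. -/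
open Set unitInterval

attribute [local instance] Path.Homotopic.setoid

/-- The class of a loop based at `z` in the fundamental group `π₁(Z, z)`. -/
noncomputable def loopClass {Z : Type*} [TopologicalSpace Z] {z : Z} (c : Path z z) :
    FundamentalGroup Z z :=
  FundamentalGroup.fromPath (X := TopCat.of Z) ⟦c⟧

/-!
A loop `c` of `M` is drawn in `X` by sampling `g ∘ c` finely and joining consecutive samples
by geodesics; the drawing stays `δ₀/300`-close to `g ∘ c`. Two paths of `X` that are uniformly
closer than `δ₀/30` are homotopic: short geodesics from `c'(t)` to `c''(t)` cut the region
between them into small squares, each of which bounds a loop inside a ball of radius `δ₀/30`.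
Along a homotopy of `c` the drawings therefore move through a single homotopy class, so
`Φ [c] := [drawing of c]` is well defined; it is multiplicative because drawings concatenate.
It is onto because `g ∘ f` is `η`-close to the identity: a loop `γ` of `X` is close to `g` of
the drawing of `f ∘ γ` in `M`.
-/

open Filter Topology CategoryTheory

theorem IsGeodesicSpace.exists_path_dist_le {Z : Type*} [MetricSpace Z] (hZ : IsGeodesicSpace Z)
    (a b : Z) : ∃ P : Path a b, ∀ s, dist (P s) a ≤ dist a b := by
  obtain ⟨γ, hcont, h0, hd, hiso⟩ := hZ a b
  have hmem (t : I) : (t : ℝ) * dist a b ∈ Icc 0 (dist a b) :=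
    ⟨mul_nonneg t.2.1 dist_nonneg, mul_le_of_le_one_left dist_nonneg t.2.2⟩
  refine ⟨⟨⟨fun t => γ (t * dist a b), hcont.comp_continuous (by fun_prop) hmem⟩,
    by simpa using h0, by simpa using hd⟩, fun s => ?_⟩
  have hs := hiso _ (hmem s) 0 (left_mem_Icc.2 dist_nonneg)
  rw [h0, sub_zero, abs_of_nonneg (hmem s).1] at hs
  exact hs.trans_le (hmem s).2

theorem DistortionLE.dist_le {X M : Type*} [MetricSpace X] [MetricSpace M] {f : X → M} {η : ℝ}
    (hf : DistortionLE f η) (a b : X) : dist (f a) (f b) ≤ dist a b + η := by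
  linarith [(abs_le.1 (hf a b)).2]

namespace unitInterval

noncomputable def half : I := ⟨1 / 2, by norm_num, by norm_num⟩

theorem dist_convexComb (x y s t : I) :
    dist (Icc.convexComb x y s) (Icc.convexComb x y t) = dist x y * dist s t := by
  simp only [Subtype.dist_eq, Real.dist_eq, Icc.coe_convexComb]
  rw [abs_sub_comm (s : ℝ), ← abs_mul]
  ring_nf

theorem dist_zero_half : dist (0 : I) half = 1 / 2 := by
  simp [Subtype.dist_eq, Real.dist_eq, half]

theorem dist_half_one : dist half (1 : I) = 1 / 2 := by
  norm_num [Subtype.dist_eq, Real.dist_eq, half]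

end unitInterval

namespace Path

variable {Y : Type*} [TopologicalSpace Y] {a b : Y}

noncomputable def firstHalf (γ : Path a b) : Path a (γ half) :=
  (γ.subpath 0 half).cast γ.source.symm rfl

noncomputable def secondHalf (γ : Path a b) : Path (γ half) b :=
  (γ.subpath half 1).cast rfl γ.target.symm

theorem firstHalf_apply (γ : Path a b) (t : I) :
    γ.firstHalf t = γ (Icc.convexComb 0 half t) := rfl

theorem secondHalf_apply (γ : Path a b) (t : I) :
    γ.secondHalf t = γ (Icc.convexComb half 1 t) := rfl

theorem firstHalf_trans_secondHalf (γ : Path a b) : γ.firstHalf.trans γ.secondHalf = γ := by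
  ext t
  rw [trans_apply]
  split_ifs <;>
  · simp only [firstHalf_apply, secondHalf_apply]
    congr 1
    ext
    simp only [Icc.coe_convexComb, half, Icc.coe_zero, Icc.coe_one]
    ring

end Path

def OscillationLE {Y : Type*} [MetricSpace Y] (f : I → Y) (n : ℕ) (ε : ℝ) : Prop :=
  ∀ s t : I, dist s t ≤ (2 ^ n)⁻¹ → dist (f s) (f t) ≤ ε

namespace OscillationLE

variable {Y : Type*} [MetricSpace Y] {a b : Y} {γ : Path a b} {n : ℕ} {ε : ℝ}

theorem dist_le {f : I → Y} (h : OscillationLE f 0 ε) (s t : I) : dist (f s) (f t) ≤ ε :=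
  h s t (by simpa [Subtype.dist_eq] using Real.dist_le_of_mem_Icc_01 s.2 t.2)

theorem firstHalf (h : OscillationLE γ (n + 1) ε) : OscillationLE γ.firstHalf n ε := by
  intro s t hst
  refine h _ _ ?_
  rw [unitInterval.dist_convexComb, unitInterval.dist_zero_half, pow_succ, mul_inv, one_div,
    mul_comm]
  gcongr

theorem secondHalf (h : OscillationLE γ (n + 1) ε) : OscillationLE γ.secondHalf n ε := by
  intro s t hst
  refine h _ _ ?_
  rw [unitInterval.dist_convexComb, unitInterval.dist_half_one, pow_succ, mul_inv, one_div,
    mul_comm]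
  gcongr

end OscillationLE

theorem eventually_oscillationLE {Y : Type*} [MetricSpace Y] (f : C(I, Y)) {ε : ℝ} (hε : 0 < ε) :
    ∀ᶠ n in atTop, OscillationLE f n ε := by
  obtain ⟨δ, hδ, hf⟩ := Metric.uniformContinuous_iff.1
    (CompactSpace.uniformContinuous_of_continuous f.continuous) ε hε
  have hpow := tendsto_inv_atTop_zero.comp 
    (tendsto_pow_atTop_atTop_of_one_lt (one_lt_two : (1 : ℝ) < 2))
  filter_upwards [hpow.eventually (gt_mem_nhds hδ)] with n hn s t hst
  exact (hf (hst.trans_lt hn)).le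

theorem Path.dist_trans_apply_le {Y Z : Type*} [TopologicalSpace Y] [MetricSpace Z] {h : Y → Z}
    {ρ : ℝ} {a b c : Y} {a' b' c' : Z} {γ₁ : Path a b} {γ₂ : Path b c} {γ₁' : Path a' b'}
    {γ₂' : Path b' c'} (h₁ : ∀ t, dist (γ₁' t) (h (γ₁ t)) ≤ ρ)
    (h₂ : ∀ t, dist (γ₂' t) (h (γ₂ t)) ≤ ρ) (t : I) :
    dist ((γ₁'.trans γ₂') t) (h ((γ₁.trans γ₂) t)) ≤ ρ := by
  rw [Path.trans_apply, Path.trans_apply]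
  split_ifs
  · exact h₁ _
  · exact h₂ _

namespace IsGeodesicSpace

variable {Y Z : Type*} [MetricSpace Y] [MetricSpace Z] {h : Y → Z} {η : ℝ}

theorem exists_path_dist_comp_le_of_oscillationLE (hZ : IsGeodesicSpace Z)
    (hh : ∀ a b, dist (h a) (h b) ≤ dist a b + η) {ε : ℝ} (n : ℕ) :
    ∀ {a b : Y} (γ : Path a b), OscillationLE γ n ε →
      ∃ γ' : Path (h a) (h b), ∀ t, dist (γ' t) (h (γ t)) ≤ 2 * (ε + η) := by
  induction n with
  | zero =>
    intro a b γ hγ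
    obtain ⟨P, hP⟩ := hZ.exists_path_dist_le (h a) (h b)
    have hclose (t : I) : dist (h (γ t)) (h a) ≤ ε + η := by
      simpa using (hh (γ t) (γ 0)).trans (by linarith [hγ.dist_le t 0])
    refine ⟨P, fun t => ?_⟩
    calc dist (P t) (h (γ t)) ≤ dist (P t) (h a) + dist (h (γ t)) (h a) := dist_triangle_right ..
      _ ≤ (ε + η) + (ε + η) := by
        gcongr
        · exact (hP t).trans (by simpa [dist_comm] using hclose 1)
        · exact hclose t
      _ = 2 * (ε + η) := by ring
  | succ n ih =>
    intro a b γ hγ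
    obtain ⟨γ₁, h₁⟩ := ih γ.firstHalf hγ.firstHalf
    obtain ⟨γ₂, h₂⟩ := ih γ.secondHalf hγ.secondHalf
    refine ⟨γ₁.trans γ₂, fun t => ?_⟩
    simpa only [γ.firstHalf_trans_secondHalf] using Path.dist_trans_apply_le h₁ h₂ t

theorem exists_path_dist_comp_le (hZ : IsGeodesicSpace Z)
    (hh : ∀ a b, dist (h a) (h b) ≤ dist a b + η) {ρ : ℝ} (hρ : 2 * η < ρ) {a b : Y}
    (γ : Path a b) :
    ∃ γ' : Path (h a) (h b), ∀ t, dist (γ' t) (h (γ t)) ≤ ρ := by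
  obtain ⟨n, hn⟩ :=
    (eventually_oscillationLE γ.toContinuousMap (ε := ρ / 2 - η) (by linarith)).exists
  obtain ⟨γ', hγ'⟩ := hZ.exists_path_dist_comp_le_of_oscillationLE hh n γ hn
  exact ⟨γ', fun t => (hγ' t).trans_eq (by ring)⟩

end IsGeodesicSpace

namespace Path.Homotopic

variable {Y : Type*} [TopologicalSpace Y] {x y z : Y} {p q : Path x y}

theorem trans_right_cancel (r : Path y z) (h : (p.trans r).Homotopic (q.trans r)) :
    p.Homotopic q := by
  rw [← Quotient.eq] at h ⊢
  exact (cancel_mono (FundamentalGroupoid.fromPath (Quotient.mk r))).1 h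

theorem of_trans_symm (h : (p.trans q.symm).Homotopic (Path.refl x)) : p.Homotopic q := by
  rw [← Quotient.eq] at h ⊢
  simp only [Quotient.mk_trans, Quotient.mk_symm, Quotient.mk_refl] at h
  calc Quotient.mk p = ((Quotient.mk p).trans (Quotient.mk q).symm).trans (Quotient.mk q) := by
        simp
    _ = Quotient.mk q := by rw [h]; simp

end Path.Homotopic

theorem NullHomotopicLoop.homotopic_refl {Y : Type*} [TopologicalSpace Y] {y : Y} {L : Path y y}
    (hL : NullHomotopicLoop L.toContinuousMap) : L.Homotopic (Path.refl y) := by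
  obtain ⟨z, H, h0, h1, hper⟩ := hL
  let F : L.toContinuousMap.Homotopy (ContinuousMap.const I z) :=
    { toContinuousMap := H.comp ContinuousMap.prodSwap
      map_zero_left := h0
      map_one_left := h1 }
  let E₀ : Path y z := (F.evalAt 0).cast L.source.symm rfl
  let E₁ : Path y z := (F.evalAt 1).cast L.target.symm rfl
  have hE : E₁ = E₀ := by
    ext s
    exact (hper s).symm
  -- naturality of the homotopy `F` along `Path.id : 0 ⟶ 1`
  have hsq : (L.trans E₁).Homotopic (E₀.trans (Path.refl z)) :=
    (Path.Homotopic.map_trans_evalAt F Path.id).pathCast (x₃ := z) L.source.symm rfl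
  rw [hE] at hsq
  exact ((hsq.trans (.trans_refl E₀)).trans (.symm (.refl_trans E₀))).trans_right_cancel E₀

namespace Path.Homotopic

variable {X : Type*} [MetricSpace X] {r : ℝ}

theorem square_of_oscillationLE (hX : IsGeodesicSpace X)
    (hsmall : ∀ (y z : X) (L : Path y y), range L ⊆ Metric.ball z r → L.Homotopic (Path.refl y))
    {D ε : ℝ} (hDε : D + ε < r) (n : ℕ) :
    ∀ {a b a' b' : X} (c : Path a b) (c' : Path a' b') (α : Path a a') (β : Path b b'),
      OscillationLE c n ε → OscillationLE c' n ε → (∀ t, dist (c t) (c' t) ≤ D) →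
      (∀ s, dist (α s) a ≤ D) → (∀ s, dist (β s) b ≤ D) →
      (c.trans β).Homotopic (α.trans c') := by
  induction n with
  | zero =>
    intro a b a' b' c c' α β hc hc' hcc' hα hβ
    refine of_trans_symm (hsmall a a _ ?_)
    have hε : 0 ≤ ε := dist_nonneg.trans (hc.dist_le 0 0)
    simp only [trans_range, symm_range, union_subset_iff]
    refine ⟨⟨?_, ?_⟩, ?_, ?_⟩ <;> rintro _ ⟨t, rfl⟩ <;> rw [Metric.mem_ball]
    · simpa using (hc.dist_le t 0).trans_lt (by linarith [dist_nonneg.trans (hα 0)])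
    · calc dist (β t) a ≤ dist (β t) b + dist (c 1) (c 0) := by simpa using dist_triangle _ _ _
        _ < r := by linarith [hβ t, hc.dist_le 1 0]
    · exact (hα t).trans_lt (by linarith)
    · calc dist (c' t) a ≤ dist (c' t) (c' 0) + dist (c 0) (c' 0) := by
            simpa [dist_comm] using dist_triangle (c' t) a' a
        _ < r := by linarith [hc'.dist_le t 0, hcc' 0]
  | succ n ih =>
    intro a b a' b' c c' α β hc hc' hcc' hα hβ
    obtain ⟨μ, hμ⟩ := hX.exists_path_dist_le (c half) (c' half)
    have h₁ := ih c.firstHalf c'.firstHalf α μ hc.firstHalf hc'.firstHalf (fun t => hcc' _) hα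
      fun s => (hμ s).trans (hcc' half)
    have h₂ := ih c.secondHalf c'.secondHalf μ β hc.secondHalf hc'.secondHalf (fun t => hcc' _)
      (fun s => (hμ s).trans (hcc' half)) hβ
    rw [← Quotient.eq] at h₁ h₂
    have : ((c.firstHalf.trans c.secondHalf).trans β).Homotopic
        (α.trans (c'.firstHalf.trans c'.secondHalf)) := by
      rw [← Quotient.eq]
      simp only [Quotient.mk_trans, Quotient.trans_assoc] at h₁ h₂ ⊢
      rw [h₂, ← Quotient.trans_assoc, h₁, Quotient.trans_assoc]
    simpa only [firstHalf_trans_secondHalf] using this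

theorem of_dist_le (hX : IsGeodesicSpace X)
    (hsmall : ∀ (y z : X) (L : Path y y), range L ⊆ Metric.ball z r → L.Homotopic (Path.refl y))
    {D : ℝ} (hD : D < r) {a b : X} {c c' : Path a b} (h : ∀ t, dist (c t) (c' t) ≤ D) :
    c.Homotopic c' := by
  have hD0 : 0 ≤ D := dist_nonneg.trans (h 0)
  have hε : 0 < (r - D) / 2 := by linarith
  obtain ⟨n, hn, hn'⟩ := ((eventually_oscillationLE c.toContinuousMap hε).and
    (eventually_oscillationLE c'.toContinuousMap hε)).exists
  have := square_of_oscillationLE hX hsmall (by linarith : D + (r - D) / 2 < r) n c c'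
    (.refl a) (.refl b) hn hn' h (by simpa using hD0) (by simpa using hD0)
  exact (trans_refl c).symm.trans (this.trans (refl_trans c'))

theorem of_dist_comp_le {M : Type*} [MetricSpace M] (hX : IsGeodesicSpace X)
    (hsmall : ∀ (y z : X) (L : Path y y), range L ⊆ Metric.ball z r → L.Homotopic (Path.refl y))
    {g : M → X} {η ρ : ℝ} (hg : ∀ a b, dist (g a) (g b) ≤ dist a b + η) (hρ : 2 * η < ρ)
    (hr : 2 * ρ + η < r) {p q : M} {c d : Path p q} (hcd : c.Homotopic d)
    {c' d' : Path (g p) (g q)} (hc : ∀ t, dist (c' t) (g (c t)) ≤ ρ)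
    (hd : ∀ t, dist (d' t) (g (d t)) ≤ ρ) : c'.Homotopic d' := by
  have homotopic_of_close {e : Path p q} {e₁ e₂ : Path (g p) (g q)}
      (h₁ : ∀ t, dist (e₁ t) (g (e t)) ≤ ρ) (h₂ : ∀ t, dist (e₂ t) (g (e t)) ≤ ρ) :
      e₁.Homotopic e₂ :=
    of_dist_le hX hsmall (D := ρ + ρ) (by linarith [hg p p, dist_self p, dist_self (g p)])
      fun t => (dist_triangle_right _ _ _).trans (add_le_add (h₁ t) (h₂ t))
  obtain ⟨F⟩ := hcd
  choose a ha using fun s => hX.exists_path_dist_comp_le hg hρ (F.eval s)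
  set C := F.toContinuousMap.curry
  have hconst : IsLocallyConstant fun s => Quotient.mk (a s) := by
    refine (IsLocallyConstant.iff_eventually_eq _).2 fun s => ?_
    have hC := Metric.tendsto_nhds.1 (C.continuous.tendsto s) (r - 2 * ρ - η) (by linarith)
    filter_upwards [hC] with s' hs'
    refine Quotient.eq.2 (of_dist_le hX hsmall (D := ρ + (dist (C s') (C s) + η) + ρ)
      (by linarith) fun t => ?_)
    calc dist (a s' t) (a s t)
        ≤ dist (a s' t) (g (C s' t)) + dist (g (C s' t)) (g (C s t)) + dist (g (C s t)) (a s t) :=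
          dist_triangle4 ..
      _ ≤ ρ + (dist (C s') (C s) + η) + ρ := by
        gcongr
        · exact ha s' t
        · exact (hg _ _).trans (by gcongr; exact (C s').dist_apply_le_dist t)
        · exact (dist_comm ..).trans_le (ha s t)
  refine (homotopic_of_close hc ?_).trans
    ((Quotient.eq.1 (hconst.apply_eq_of_preconnectedSpace 0 1)).trans (homotopic_of_close ?_ hd))
  · simpa using ha 0
  · simpa using ha 1

end Path.Homotopic

theorem FundamentalGroup.existsUnique_monoidHom_of_rel {X Y : Type*} [TopologicalSpace X]
    [TopologicalSpace Y] {x : X} {y : Y} (R : Path x x → Path y y → Prop)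
    (total : ∀ c, ∃ c', R c c')
    (coherent : ∀ {c d c' d'}, c.Homotopic d → R c c' → R d d' → c'.Homotopic d')
    (trans : ∀ {c d c' d'}, R c c' → R d d' → R (c.trans d) (c'.trans d')) :
    ∃! Φ : FundamentalGroup X x →* FundamentalGroup Y y,
      ∀ c c', R c c' → Φ (loopClass c) = loopClass c' := by
  choose app happ using total
  let Φ₀ : FundamentalGroup X x → FundamentalGroup Y y :=
    Quotient.lift (fun c => loopClass (app c)) fun c d h =>
      Quotient.sound (coherent h (happ c) (happ d))
  have hΦ₀ (c c') (h : R c c') : Φ₀ (loopClass c) = loopClass c' :=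
    Quotient.sound (coherent (.refl c) (happ c) h)
  refine ⟨MonoidHom.mk' Φ₀ ?_, hΦ₀, fun Ψ hΨ => ?_⟩
  · rintro ⟨c⟩ ⟨d⟩
    exact hΦ₀ (d.trans c) _ (trans (happ d) (happ c))
  · ext ⟨c⟩
    exact (hΨ c _ (happ c)).trans (hΦ₀ c _ (happ c)).symm

theorem forward_hom_exists_unique_surjective_general {X M : Type*} [MetricSpace X] [MetricSpace M]
    (hX : IsGeodesicSpace X) (hM : IsGeodesicSpace M)
    (x : X) (p : M) (δ₀ η : ℝ) (hη : 0 < η) (hηδ : η ≤ δ₀ / 2100)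
    (g : M → X) (f : X → M) (hg : DistortionLE g η) (hf : DistortionLE f η)
    (hgp : g p = x) (hfx : f x = p)
    (hgf : ∀ z : X, dist (g (f z)) z ≤ η)
    (hcontract : ∀ c : C(unitInterval, X), c 0 = c 1 →
      (∃ z : X, Set.range c ⊆ Metric.ball z (δ₀ / 30)) → NullHomotopicLoop c) :
    (∃! Φ : FundamentalGroup M p →* FundamentalGroup X x,
        ∀ (c : Path p p) (c' : Path x x),
          (∀ t : unitInterval, dist (c' t) (g (c t)) ≤ δ₀ / 300) →
          Φ (loopClass c) = loopClass c') ∧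
    (∀ Φ : FundamentalGroup M p →* FundamentalGroup X x,
        (∀ (c : Path p p) (c' : Path x x),
          (∀ t : unitInterval, dist (c' t) (g (c t)) ≤ δ₀ / 300) →
          Φ (loopClass c) = loopClass c') →
        Function.Surjective Φ) := by
  subst hgp
  have hsmall (y z : X) (L : Path y y) (hL : range L ⊆ Metric.ball z (δ₀ / 30)) :
      L.Homotopic (Path.refl y) :=
    (hcontract _ (L.source.trans L.target.symm) ⟨z, hL⟩).homotopic_refl
  refine ⟨FundamentalGroup.existsUnique_monoidHom_of_rel _
    (fun c => hX.exists_path_dist_comp_le hg.dist_le (by linarith) c)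
    (fun hcd hc hd => hcd.of_dist_comp_le hX hsmall hg.dist_le (by linarith) (by linarith) hc hd)
    (fun hc hd => Path.dist_trans_apply_le hc hd), fun Φ hΦ => ?_⟩
  rintro ⟨γ⟩
  obtain ⟨c, hc⟩ := hM.exists_path_dist_comp_le hf.dist_le (ρ := δ₀ / 525) (by linarith) γ
  refine ⟨loopClass (c.cast hfx.symm hfx.symm), hΦ _ γ fun t => ?_⟩
  calc dist (γ t) (g (c t)) ≤ dist (g (f (γ t))) (γ t) + dist (g (f (γ t))) (g (c t)) :=
        dist_triangle_left ..
    _ ≤ η + (dist (f (γ t)) (c t) + η) := add_le_add (hgf _) (hg.dist_le ..)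
    _ ≤ δ₀ / 300 := by linarith [dist_comm (f (γ t)) (c t), hc t]

/-- the forward homomorphism. Given mutually (almost) inverse maps
`g : M → X`, `f : X → M` of distortion at most `η ≤ δ₀/2100` between geodesic spaces,
with `X` semi-locally simply connected at scale `δ₀/30`, there is a unique group
homomorphism `Φ : π₁(M, p) → π₁(X, x)` sending `[c] ↦ [c']` whenever `c'` is a loop at
`x` that is `δ₀/300`-close to `g ∘ c`; moreover `Φ` is surjective. -/
theorem forward_hom_exists_unique_surjective {X M : Type*} [MetricSpace X] [MetricSpace M]
    (hX : IsGeodesicSpace X) (hM : IsGeodesicSpace M)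
    (x : X) (p : M) (δ₀ η : ℝ) (hδ₀ : 0 < δ₀) (hη : 0 < η) (hηδ : η ≤ δ₀ / 2100)
    (g : M → X) (f : X → M) (hg : DistortionLE g η) (hf : DistortionLE f η)
    (hgp : g p = x) (hfx : f x = p)
    (hgf : ∀ z : X, dist (g (f z)) z ≤ η)
    (hcontract : ∀ c : C(unitInterval, X), c 0 = c 1 →
      (∃ z : X, Set.range c ⊆ Metric.ball z (δ₀ / 30)) → NullHomotopicLoop c) :
    (∃! Φ : FundamentalGroup M p →* FundamentalGroup X x,
        ∀ (c : Path p p) (c' : Path x x),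
          (∀ t : unitInterval, dist (c' t) (g (c t)) ≤ δ₀ / 300) →
          Φ (loopClass c) = loopClass c') ∧
    (∀ Φ : FundamentalGroup M p →* FundamentalGroup X x,
        (∀ (c : Path p p) (c' : Path x x),
          (∀ t : unitInterval, dist (c' t) (g (c t)) ≤ δ₀ / 300) →
          Φ (loopClass c) = loopClass c') →
        Function.Surjective Φ) :=
  forward_hom_exists_unique_surjective_general hX hM x p δ₀ η hη hηδ g f hg hf hgp hfx hgf hcontract
end
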